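/- Let t be an m-trace on an ideal I of a pivotal k-category C, let π : C → C/N_t be the quotient by the kernel N_t of t, and let J be the ideal of C/N_t generated by π(I). Then every object of J is of the form π(W) where π(W) is a retract of π(V) for some V ∈ I. Moreover, choosing i : W → V and p : V → W in C with p∘i = id_W + n for some n ∈ N_t(W,W), the assignment t̄_{π(W)}(f̄) := t_V(i∘f∘p) (for any lift f of f̄) is well-defined: it is independent of the choices of the lift f and of the morphisms i, p, V. -/

import Mathlib

open CategoryTheory CategoryTheory.MonoidalCategory

namespace SkeinPaper

/-- A pivotal structure: a dual object with four (co)evaluation morphisms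
satisfying the zig-zag identities. -/
class PivotalData (C : Type*) [Category C] [MonoidalCategory C] where
  dual : C → C
  coev : ∀ V : C, 𝟙_ C ⟶ V ⊗ dual V
  ev : ∀ V : C, dual V ⊗ V ⟶ 𝟙_ C
  coev' : ∀ V : C, 𝟙_ C ⟶ dual V ⊗ V
  ev' : ∀ V : C, V ⊗ dual V ⟶ 𝟙_ C
  zig1 : ∀ V : C, (λ_ V).inv ≫ (coev V ▷ V) ≫ (α_ V (dual V) V).hom ≫ (V ◁ ev V) ≫
    (ρ_ V).hom = 𝟙 V
  zig2 : ∀ V : C, (ρ_ (dual V)).inv ≫ (dual V ◁ coev V) ≫ (α_ (dual V) V (dual V)).inv ≫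
    (ev V ▷ dual V) ≫ (λ_ (dual V)).hom = 𝟙 (dual V)
  zig3 : ∀ V : C, (ρ_ V).inv ≫ (V ◁ coev' V) ≫ (α_ V (dual V) V).inv ≫ (ev' V ▷ V) ≫
    (λ_ V).hom = 𝟙 V
  zig4 : ∀ V : C, (λ_ (dual V)).inv ≫ (coev' V ▷ dual V) ≫ (α_ (dual V) V (dual V)).hom ≫
    (dual V ◁ ev' V) ≫ (ρ_ (dual V)).hom = 𝟙 (dual V)

open PivotalData

variable {C : Type*} [Category C] [MonoidalCategory C] [PivotalData C]

/-- The dual of a morphism. -/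
def dualHom {V W : C} (f : V ⟶ W) : dual W ⟶ dual V :=
  (ρ_ (dual W)).inv ≫ (dual W ◁ coev V) ≫ (dual W ◁ (f ▷ dual V)) ≫
    (α_ (dual W) W (dual V)).inv ≫ (ev W ▷ dual V) ≫ (λ_ (dual V)).hom

/-- Right partial trace of `f : U ⊗ W ⟶ U ⊗ W`. -/
def ptrR {U W : C} (f : U ⊗ W ⟶ U ⊗ W) : U ⟶ U :=
  (ρ_ U).inv ≫ (U ◁ coev W) ≫ (α_ U W (dual W)).inv ≫ (f ▷ dual W) ≫
    (α_ U W (dual W)).hom ≫ (U ◁ ev' W) ≫ (ρ_ U).hom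

/-- Left partial trace of `g : W ⊗ U ⟶ W ⊗ U`. -/
def ptrL {U W : C} (g : W ⊗ U ⟶ W ⊗ U) : U ⟶ U :=
  (λ_ U).inv ≫ (coev' W ▷ U) ≫ (α_ (dual W) W U).hom ≫ (dual W ◁ g) ≫
    (α_ (dual W) W U).inv ≫ (ev W ▷ U) ≫ (λ_ U).hom

/-- An ideal of objects: a class of objects closed under tensoring with arbitrary
objects and under retracts. -/
structure CatIdeal (C : Type*) [Category C] [MonoidalCategory C] where
  mem : C → Prop
  tensor_right : ∀ ⦃V : C⦄ (W : C), mem V → mem (V ⊗ W)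
  tensor_left : ∀ ⦃V : C⦄ (W : C), mem V → mem (W ⊗ V)
  retract : ∀ ⦃W V : C⦄ (f : W ⟶ V) (g : V ⟶ W), f ≫ g = 𝟙 W → mem V → mem W

variable (k : Type*) [Field k]

section Trace
variable [Preadditive C] [Linear k C]

/-- A right m-trace on an ideal. -/
structure RightMTrace (I : CatIdeal C) where
  t : ∀ V : C, I.mem V → ((V ⟶ V) →ₗ[k] k)
  cyclic : ∀ {U V : C} (hU : I.mem U) (hV : I.mem V) (f : V ⟶ U) (g : U ⟶ V),
    t V hV (f ≫ g) = t U hU (g ≫ f)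
  rightPartial : ∀ {U : C} (W : C) (hU : I.mem U) (f : U ⊗ W ⟶ U ⊗ W),
    t (U ⊗ W) (I.tensor_right W hU) f = t U hU (ptrR f)

/-- An m-trace on an ideal: cyclic, with both the right and left partial trace
properties. -/
structure MTrace (I : CatIdeal C) where
  t : ∀ V : C, I.mem V → ((V ⟶ V) →ₗ[k] k)
  cyclic : ∀ {U V : C} (hU : I.mem U) (hV : I.mem V) (f : V ⟶ U) (g : U ⟶ V),
    t V hV (f ≫ g) = t U hU (g ≫ f)
  rightPartial : ∀ {U : C} (W : C) (hU : I.mem U) (f : U ⊗ W ⟶ U ⊗ W),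
    t (U ⊗ W) (I.tensor_right W hU) f = t U hU (ptrR f)
  leftPartial : ∀ {U : C} (W : C) (hU : I.mem U) (g : W ⊗ U ⟶ W ⊗ U),
    t (W ⊗ U) (I.tensor_left W hU) g = t U hU (ptrL g)

/-- The kernel of a right m-trace. -/
def RightMTrace.inKer {I : CatIdeal C} (τ : RightMTrace k I) {V W : C} (f : V ⟶ W) : Prop :=
  ∀ (U : C) (hU : I.mem U) (g₁ : W ⟶ U) (g₂ : U ⟶ V), τ.t U hU (g₂ ≫ f ≫ g₁) = 0

/-- The kernel of an m-trace. -/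
def MTrace.inKer {I : CatIdeal C} (τ : MTrace k I) {V W : C} (f : V ⟶ W) : Prop :=
  ∀ (U : C) (hU : I.mem U) (g₁ : W ⟶ U) (g₂ : U ⟶ V), τ.t U hU (g₂ ≫ f ≫ g₁) = 0

/-- A tensor ideal of morphisms. -/
structure TensorIdealHom where
  N : ∀ V W : C, Submodule k (V ⟶ W)
  comp_pre : ∀ {V W X : C} (h : X ⟶ V) {f : V ⟶ W}, f ∈ N V W → h ≫ f ∈ N X W
  comp_post : ∀ {V W X : C} (h : W ⟶ X) {f : V ⟶ W}, f ∈ N V W → f ≫ h ∈ N V X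
  tensor_left : ∀ {V W V' W' : C} (g : V' ⟶ W') {f : V ⟶ W}, f ∈ N V W →
    (g ⊗ₘ f) ∈ N (V' ⊗ V) (W' ⊗ W)
  tensor_right : ∀ {V W V' W' : C} (g : V' ⟶ W') {f : V ⟶ W}, f ∈ N V W →
    (f ⊗ₘ g) ∈ N (V ⊗ V') (W ⊗ W')

end Trace

end SkeinPaper

open SkeinPaper

variable {k : Type*} [Field k] {C : Type*} [Category C] [MonoidalCategory C]
  [Preadditive C] [Linear k C] [PivotalData C]

/-- An "ideal of the quotient category `C/N_t`", expressed in `C`: a class of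
objects closed under tensoring and under retracts modulo the kernel `N_t` of
the m-trace `τ`. -/
structure QuotIdeal {I : CatIdeal C} (τ : MTrace k I) where
  mem : C → Prop
  tensor_right : ∀ ⦃V : C⦄ (W : C), mem V → mem (V ⊗ W)
  tensor_left : ∀ ⦃V : C⦄ (W : C), mem V → mem (W ⊗ V)
  retract : ∀ ⦃W V : C⦄ (i : W ⟶ V) (p : V ⟶ W),
    τ.inKer k (i ≫ p - 𝟙 W) → mem V → mem W

/-- Membership in the ideal `J` of `C/N_t` generated by `π(I)`. -/
def Jmem {I : CatIdeal C} (τ : MTrace k I) (W : C) : Prop :=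
  ∀ J : QuotIdeal τ, (∀ V : C, I.mem V → J.mem V) → J.mem W

/-!
Write `N` for the kernel of `t`. The objects `W` admitting `i : W ⟶ V`, `p : V ⟶ W` with `V ∈ I`
and `i ≫ p - 𝟙 W ∈ N` contain `I` and form an ideal of `C/N`, so they contain `J`. Closure under
retracts is composition of retractions; closure under tensor products says that `N` is stable under
whiskering. For the latter, the extra strand `X` of `U ⟶ W ⊗ X ⟶ W ⊗ X ⟶ U` is bent around to
`U ⊗ X*` (or `X* ⊗ U`), and the partial trace property brings the trace back to `U`; closing the
strand through `X*` produces `X**`, identified with `X` by the comparison of the two right duals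
`X` and `X**` of `X*`.

Well-definedness is cyclicity:
`t_V(p f i) = t_V(p f i' p' i) = t_{V'}(p' i p f i') = t_{V'}(p' f i')`,
each equality holding modulo a term that vanishes because `i ≫ p - 𝟙` or `i' ≫ p' - 𝟙` lies in `N`.
-/

namespace SkeinPaper.PivotalData

variable {D : Type*} [Category D] [MonoidalCategory D] [PivotalData D]

lemma zig1' (V : D) : (coev V ▷ V) ≫ (α_ V (dual V) V).hom ≫ (V ◁ ev V) =
    (λ_ V).hom ≫ (ρ_ V).inv := by
  rw [← cancel_epi (λ_ V).inv, ← cancel_mono (ρ_ V).hom]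
  simpa using zig1 V

lemma zig2' (V : D) : (dual V ◁ coev V) ≫ (α_ (dual V) V (dual V)).inv ≫ (ev V ▷ dual V) =
    (ρ_ (dual V)).hom ≫ (λ_ (dual V)).inv := by
  rw [← cancel_epi (ρ_ (dual V)).inv, ← cancel_mono (λ_ (dual V)).hom]
  simpa using zig2 V

lemma zig3' (V : D) : (V ◁ coev' V) ≫ (α_ V (dual V) V).inv ≫ (ev' V ▷ V) =
    (ρ_ V).hom ≫ (λ_ V).inv := by
  rw [← cancel_epi (ρ_ V).inv, ← cancel_mono (λ_ V).hom]
  simpa using zig3 V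

lemma zig4' (V : D) : (coev' V ▷ dual V) ≫ (α_ (dual V) V (dual V)).hom ≫ (dual V ◁ ev' V) =
    (λ_ (dual V)).hom ≫ (ρ_ (dual V)).inv := by
  rw [← cancel_epi (λ_ (dual V)).inv, ← cancel_mono (ρ_ (dual V)).hom]
  simpa using zig4 V

abbrev exactPairing (X : D) : ExactPairing X (dual X) where
  coevaluation' := coev X
  evaluation' := ev X
  coevaluation_evaluation' := zig2' X
  evaluation_coevaluation' := zig1' X

abbrev exactPairing' (X : D) : ExactPairing (dual X) X where
  coevaluation' := coev' X
  evaluation' := ev' X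
  coevaluation_evaluation' := zig3' X
  evaluation_coevaluation' := zig4' X

/-- `X` and `X**` are both right duals of `X*`, via `(coev' X, ev' X)` and
`(coev X*, ev X*)` respectively. -/
def doubleDualIso (X : D) : X ≅ dual (dual X) :=
  rightDualIso (exactPairing' X) (exactPairing (dual X))

lemma doubleDualIso_hom (X : D) : (doubleDualIso X).hom =
    (ρ_ X).inv ≫ (X ◁ coev (dual X)) ≫ (α_ X (dual X) (dual (dual X))).inv ≫
      (ev' X ▷ dual (dual X)) ≫ (λ_ (dual (dual X))).hom := by
  dsimp [doubleDualIso, rightDualIso, rightAdjointMate, ExactPairing.coevaluation,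
    ExactPairing.evaluation, exactPairing, exactPairing']
  monoidal

lemma doubleDualIso_inv (X : D) : (doubleDualIso X).inv =
    (ρ_ (dual (dual X))).inv ≫ (dual (dual X) ◁ coev' X) ≫
      (α_ (dual (dual X)) (dual X) X).inv ≫ (ev (dual X) ▷ X) ≫ (λ_ X).hom := by
  dsimp [doubleDualIso, rightDualIso, rightAdjointMate, ExactPairing.coevaluation,
    ExactPairing.evaluation, exactPairing, exactPairing']
  monoidal

end SkeinPaper.PivotalData

namespace SkeinPaper

open PivotalData

variable {D : Type*} [Category D] [MonoidalCategory D] [PivotalData D]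

section Bending

variable {U W W' X : D}

/- `capR g`, `cupR h` (resp. `capL g`, `cupL h`) bend the strand `X` of `g`, `h` into a strand `X*`
to the right (resp. left) of `U`, so that `ptrR` (resp. `ptrL`) closes it up again. -/
def capR (g : U ⟶ W ⊗ X) : U ⊗ dual X ⟶ W :=
  (g ▷ dual X) ≫ (α_ W X (dual X)).hom ≫ (W ◁ ev' X) ≫ (ρ_ W).hom

def cupR (h : W ⊗ X ⟶ U) : W ⟶ U ⊗ dual X :=
  (ρ_ W).inv ≫ (W ◁ (coev' (dual X) ≫ ((doubleDualIso X).inv ▷ dual X))) ≫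
    (α_ W X (dual X)).inv ≫ (h ▷ dual X)

def capL (g : U ⟶ X ⊗ W) : dual X ⊗ U ⟶ W :=
  (dual X ◁ g) ≫ (α_ (dual X) X W).inv ≫
    (((dual X ◁ (doubleDualIso X).hom) ≫ ev' (dual X)) ▷ W) ≫ (λ_ W).hom

def cupL (h : X ⊗ W ⟶ U) : W ⟶ dual X ⊗ U :=
  (λ_ W).inv ≫ (coev' X ▷ W) ≫ (α_ (dual X) X W).hom ≫ (dual X ◁ h)

lemma coev_capR (g : U ⟶ W ⊗ X) :
    (ρ_ U).inv ≫ (U ◁ coev (dual X)) ≫ (α_ U (dual X) (dual (dual X))).inv ≫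
      (capR g ▷ dual (dual X)) = g ≫ (W ◁ (doubleDualIso X).hom) := by
  rw [doubleDualIso_hom]
  dsimp [capR]
  calc
    _ = 𝟙 _ ⊗≫ (U ◁ coev (dual X) ≫ g ▷ (dual X ⊗ dual (dual X))) ⊗≫
        (W ◁ ev' X) ▷ dual (dual X) ⊗≫ 𝟙 _ := by monoidal
    _ = 𝟙 _ ⊗≫ (g ▷ 𝟙_ D ≫ (W ⊗ X) ◁ coev (dual X)) ⊗≫
        (W ◁ ev' X) ▷ dual (dual X) ⊗≫ 𝟙 _ := by rw [← whisker_exchange]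
    _ = _ := by monoidal

lemma cupR_ev' (h : W ⊗ X ⟶ U) :
    (cupR h ▷ dual (dual X)) ≫ (α_ U (dual X) (dual (dual X))).hom ≫ (U ◁ ev' (dual X)) ≫
      (ρ_ U).hom = (W ◁ (doubleDualIso X).inv) ≫ h := by
  set v := (doubleDualIso X).inv
  dsimp [cupR]
  calc
    _ = 𝟙 _ ⊗≫ W ◁ (coev' (dual X) ≫ v ▷ dual X) ▷ dual (dual X) ⊗≫
        (h ▷ (dual X ⊗ dual (dual X)) ≫ U ◁ ev' (dual X)) ⊗≫ 𝟙 _ := by monoidal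
    _ = 𝟙 _ ⊗≫ W ◁ (coev' (dual X) ≫ v ▷ dual X) ▷ dual (dual X) ⊗≫
        ((W ⊗ X) ◁ ev' (dual X) ≫ h ▷ 𝟙_ D) ⊗≫ 𝟙 _ := by rw [whisker_exchange]
    _ = 𝟙 _ ⊗≫ W ◁ (coev' (dual X) ▷ dual (dual X)) ⊗≫
        W ◁ ((v ▷ (dual X ⊗ dual (dual X))) ≫ X ◁ ev' (dual X)) ⊗≫ h ⊗≫ 𝟙 _ := by
      monoidal
    _ = 𝟙 _ ⊗≫ W ◁ (coev' (dual X) ▷ dual (dual X)) ⊗≫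
        W ◁ ((dual (dual X) ◁ ev' (dual X)) ≫ v ▷ 𝟙_ D) ⊗≫ h ⊗≫ 𝟙 _ := by
      rw [whisker_exchange]
    _ = 𝟙 _ ⊗≫ W ◁ ((coev' (dual X) ▷ dual (dual X)) ≫
        (α_ (dual (dual X)) (dual X) (dual (dual X))).hom ≫
        (dual (dual X) ◁ ev' (dual X))) ⊗≫ W ◁ v ⊗≫ h ⊗≫ 𝟙 _ := by monoidal
    _ = _ := by rw [zig4' (dual X)]; monoidal

lemma ptrR_capR_comp_cupR (f : W ⟶ W') (g : U ⟶ W ⊗ X) (h : W' ⊗ X ⟶ U) :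
    ptrR (capR g ≫ f ≫ cupR h) = g ≫ (f ▷ X) ≫ h := by
  have split : ptrR (capR g ≫ f ≫ cupR h) =
      ((ρ_ U).inv ≫ (U ◁ coev (dual X)) ≫ (α_ U (dual X) (dual (dual X))).inv ≫
        (capR g ▷ dual (dual X))) ≫ (f ▷ dual (dual X)) ≫
      ((cupR h ▷ dual (dual X)) ≫ (α_ U (dual X) (dual (dual X))).hom ≫
        (U ◁ ev' (dual X)) ≫ (ρ_ U).hom) := by
    simp [ptrR, comp_whiskerRight]
  rw [split, coev_capR, cupR_ev']
  calc
    _ = g ≫ ((W ◁ (doubleDualIso X).hom) ≫ (f ▷ dual (dual X))) ≫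
        (W' ◁ (doubleDualIso X).inv) ≫ h := by simp
    _ = g ≫ ((f ▷ X) ≫ (W' ◁ (doubleDualIso X).hom)) ≫
        (W' ◁ (doubleDualIso X).inv) ≫ h := by rw [whisker_exchange]
    _ = _ := by simp

lemma coev'_capL (g : U ⟶ X ⊗ W) :
    (λ_ U).inv ≫ (coev' (dual X) ▷ U) ≫ (α_ (dual (dual X)) (dual X) U).hom ≫
      (dual (dual X) ◁ capL g) = g ≫ ((doubleDualIso X).hom ▷ W) := by
  set u := (doubleDualIso X).hom
  dsimp [capL]
  calc
    _ = 𝟙 _ ⊗≫ (coev' (dual X) ▷ U ≫ (dual (dual X) ⊗ dual X) ◁ g) ⊗≫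
        ((dual (dual X) ⊗ dual X) ◁ (u ▷ W)) ⊗≫
        (dual (dual X) ◁ (ev' (dual X) ▷ W)) ⊗≫ 𝟙 _ := by monoidal
    _ = 𝟙 _ ⊗≫ (𝟙_ D ◁ g ≫ coev' (dual X) ▷ (X ⊗ W)) ⊗≫
        ((dual (dual X) ⊗ dual X) ◁ (u ▷ W)) ⊗≫
        (dual (dual X) ◁ (ev' (dual X) ▷ W)) ⊗≫ 𝟙 _ := by rw [whisker_exchange]
    _ = 𝟙 _ ⊗≫ (𝟙_ D ◁ g) ⊗≫ ((coev' (dual X) ▷ (X ⊗ W)) ≫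
        ((dual (dual X) ⊗ dual X) ◁ (u ▷ W))) ⊗≫
        (dual (dual X) ◁ (ev' (dual X) ▷ W)) ⊗≫ 𝟙 _ := by monoidal
    _ = 𝟙 _ ⊗≫ (𝟙_ D ◁ g) ⊗≫ ((𝟙_ D ◁ (u ▷ W)) ≫
        (coev' (dual X) ▷ (dual (dual X) ⊗ W))) ⊗≫
        (dual (dual X) ◁ (ev' (dual X) ▷ W)) ⊗≫ 𝟙 _ := by rw [← whisker_exchange]
    _ = g ⊗≫ (u ▷ W) ⊗≫ (((coev' (dual X) ▷ dual (dual X)) ≫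
        (α_ (dual (dual X)) (dual X) (dual (dual X))).hom ≫
        (dual (dual X) ◁ ev' (dual X))) ▷ W) ⊗≫ 𝟙 _ := by monoidal
    _ = _ := by rw [zig4' (dual X)]; monoidal

lemma cupL_ev (h : X ⊗ W ⟶ U) :
    (dual (dual X) ◁ cupL h) ≫ (α_ (dual (dual X)) (dual X) U).inv ≫ (ev (dual X) ▷ U) ≫
      (λ_ U).hom = ((doubleDualIso X).inv ▷ W) ≫ h := by
  rw [doubleDualIso_inv]
  dsimp [cupL]
  calc
    _ = 𝟙 _ ⊗≫ dual (dual X) ◁ (coev' X ▷ W) ⊗≫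
        ((dual (dual X) ⊗ dual X) ◁ h ≫ ev (dual X) ▷ U) ⊗≫ 𝟙 _ := by monoidal
    _ = 𝟙 _ ⊗≫ dual (dual X) ◁ (coev' X ▷ W) ⊗≫
        (ev (dual X) ▷ (X ⊗ W) ≫ 𝟙_ D ◁ h) ⊗≫ 𝟙 _ := by rw [whisker_exchange]
    _ = _ := by monoidal

lemma ptrL_capL_comp_cupL (f : W ⟶ W') (g : U ⟶ X ⊗ W) (h : X ⊗ W' ⟶ U) :
    ptrL (capL g ≫ f ≫ cupL h) = g ≫ (X ◁ f) ≫ h := by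
  have split : ptrL (capL g ≫ f ≫ cupL h) =
      ((λ_ U).inv ≫ (coev' (dual X) ▷ U) ≫ (α_ (dual (dual X)) (dual X) U).hom ≫
        (dual (dual X) ◁ capL g)) ≫ (dual (dual X) ◁ f) ≫
      ((dual (dual X) ◁ cupL h) ≫ (α_ (dual (dual X)) (dual X) U).inv ≫
        (ev (dual X) ▷ U) ≫ (λ_ U).hom) := by
    simp [ptrL, MonoidalCategory.whiskerLeft_comp]
  rw [split, coev'_capL, cupL_ev]
  calc
    _ = g ≫ (((doubleDualIso X).hom ▷ W) ≫ (dual (dual X) ◁ f)) ≫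
        ((doubleDualIso X).inv ▷ W') ≫ h := by simp
    _ = g ≫ ((X ◁ f) ≫ ((doubleDualIso X).hom ▷ W')) ≫
        ((doubleDualIso X).inv ▷ W') ≫ h := by rw [← whisker_exchange]
    _ = _ := by simp

end Bending

end SkeinPaper

namespace SkeinPaper.MTrace

open PivotalData

variable {I : CatIdeal C} (τ : MTrace k I)

lemma t_comp_whiskerRight_comp {U W W' : C} (X : C) (hU : I.mem U) (f : W ⟶ W')
    (g : U ⟶ W ⊗ X) (h : W' ⊗ X ⟶ U) :
    τ.t U hU (g ≫ (f ▷ X) ≫ h) =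
      τ.t (U ⊗ dual X) (I.tensor_right (dual X) hU) (capR g ≫ f ≫ cupR h) := by
  rw [τ.rightPartial, ptrR_capR_comp_cupR]

lemma t_comp_whiskerLeft_comp {U W W' : C} (X : C) (hU : I.mem U) (f : W ⟶ W')
    (g : U ⟶ X ⊗ W) (h : X ⊗ W' ⟶ U) :
    τ.t U hU (g ≫ (X ◁ f) ≫ h) =
      τ.t (dual X ⊗ U) (I.tensor_left (dual X) hU) (capL g ≫ f ≫ cupL h) := by
  rw [τ.leftPartial, ptrL_capL_comp_cupL]

variable {τ}

lemma inKer_zero {A B : C} : τ.inKer k (0 : A ⟶ B) := by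
  intro U hU g₁ g₂
  simp

lemma inKer.add {A B : C} {m n : A ⟶ B} (hm : τ.inKer k m) (hn : τ.inKer k n) :
    τ.inKer k (m + n) := by
  intro U hU g₁ g₂
  rw [Preadditive.add_comp, Preadditive.comp_add, map_add, hm, hn, add_zero]

lemma inKer.comp {A B A' B' : C} {n : A ⟶ B} (hn : τ.inKer k n) (a : A' ⟶ A) (b : B ⟶ B') :
    τ.inKer k (a ≫ n ≫ b) := by
  intro U hU g₁ g₂
  simpa using hn U hU (b ≫ g₁) (g₂ ≫ a)

lemma inKer.whiskerRight_sub {W W' : C} {f₁ f₂ : W ⟶ W'} (hf : τ.inKer k (f₁ - f₂)) (X : C) :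
    τ.inKer k (f₁ ▷ X - f₂ ▷ X) := by
  intro U hU g₁ g₂
  rw [Preadditive.sub_comp, Preadditive.comp_sub, map_sub, τ.t_comp_whiskerRight_comp,
    τ.t_comp_whiskerRight_comp, ← map_sub, ← Preadditive.comp_sub, ← Preadditive.sub_comp]
  exact hf _ _ _ _

lemma inKer.whiskerLeft_sub {W W' : C} {f₁ f₂ : W ⟶ W'} (hf : τ.inKer k (f₁ - f₂)) (X : C) :
    τ.inKer k (X ◁ f₁ - X ◁ f₂) := by
  intro U hU g₁ g₂
  rw [Preadditive.sub_comp, Preadditive.comp_sub, map_sub, τ.t_comp_whiskerLeft_comp,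
    τ.t_comp_whiskerLeft_comp, ← map_sub, ← Preadditive.comp_sub, ← Preadditive.sub_comp]
  exact hf _ _ _ _

lemma t_comp_eq_of_inKer_sub {V W W' : C} (hV : I.mem V) (p : V ⟶ W) (i : W' ⟶ V)
    {f f' : W ⟶ W'} (hf : τ.inKer k (f - f')) :
    τ.t V hV (p ≫ f ≫ i) = τ.t V hV (p ≫ f' ≫ i) := by
  rw [← sub_eq_zero, ← map_sub, ← Preadditive.comp_sub, ← Preadditive.sub_comp]
  exact hf V hV i p

lemma t_comp_eq_of_retract {W V V' : C} (hV : I.mem V) (hV' : I.mem V')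
    {i : W ⟶ V} {p : V ⟶ W} {i' : W ⟶ V'} {p' : V' ⟶ W}
    (hip : τ.inKer k (i ≫ p - 𝟙 W)) (hip' : τ.inKer k (i' ≫ p' - 𝟙 W)) (f : W ⟶ W) :
    τ.t V hV (p ≫ f ≫ i) = τ.t V' hV' (p' ≫ f ≫ i') := by
  have hf' : τ.inKer k (f ≫ i' ≫ p' - f) := by
    simpa [Preadditive.comp_sub] using hip'.comp f (𝟙 W)
  have hf : τ.inKer k (i ≫ p ≫ f - f) := by
    simpa [Preadditive.sub_comp] using hip.comp (𝟙 W) f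
  calc τ.t V hV (p ≫ f ≫ i)
      = τ.t V hV (p ≫ (f ≫ i' ≫ p') ≫ i) := (t_comp_eq_of_inKer_sub hV p i hf').symm
    _ = τ.t V' hV' (p' ≫ (i ≫ p ≫ f) ≫ i') := by
      simpa using τ.cyclic hV' hV (p ≫ f ≫ i') (p' ≫ i)
    _ = τ.t V' hV' (p' ≫ f ≫ i') := t_comp_eq_of_inKer_sub hV' p' i' hf

variable (τ) in
def retractIdeal : QuotIdeal τ where
  mem W := ∃ V : C, I.mem V ∧ ∃ (i : W ⟶ V) (p : V ⟶ W), τ.inKer k (i ≫ p - 𝟙 W)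
  tensor_right := by
    rintro W X ⟨V, hV, i, p, hip⟩
    refine ⟨V ⊗ X, I.tensor_right X hV, i ▷ X, p ▷ X, ?_⟩
    simpa using hip.whiskerRight_sub X
  tensor_left := by
    rintro W X ⟨V, hV, i, p, hip⟩
    refine ⟨X ⊗ V, I.tensor_left X hV, X ◁ i, X ◁ p, ?_⟩
    simpa using hip.whiskerLeft_sub X
  retract := by
    rintro W V i p hip ⟨V₀, hV₀, i₀, p₀, hip₀⟩
    refine ⟨V₀, hV₀, i ≫ i₀, p₀ ≫ p, ?_⟩
    have split : (i ≫ i₀) ≫ (p₀ ≫ p) - 𝟙 W = i ≫ (i₀ ≫ p₀ - 𝟙 V) ≫ p + (i ≫ p - 𝟙 W) := by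
      simp [Preadditive.comp_sub, Preadditive.sub_comp]
    rw [split]
    exact (hip₀.comp i p).add hip

end SkeinPaper.MTrace

/-- Every object of the ideal `J` of `C/N_t` generated by `π(I)`
is (the image of) a retract modulo `N_t` of some `V ∈ I`; and the purified
trace `t̄_{π(W)}(f̄) := t_V(i∘f∘p)` is well-defined, independent of the lift `f`
and of the choice of `V`, `i`, `p`. -/
theorem stmt_10 {I : CatIdeal C} (τ : MTrace k I) :
    (∀ W : C, Jmem τ W →
      ∃ V : C, I.mem V ∧ ∃ (i : W ⟶ V) (p : V ⟶ W), τ.inKer k (i ≫ p - 𝟙 W)) ∧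
    (∀ (W V V' : C) (hV : I.mem V) (hV' : I.mem V')
      (i : W ⟶ V) (p : V ⟶ W) (i' : W ⟶ V') (p' : V' ⟶ W),
      τ.inKer k (i ≫ p - 𝟙 W) → τ.inKer k (i' ≫ p' - 𝟙 W) →
      ∀ f f' : W ⟶ W, τ.inKer k (f - f') →
        τ.t V hV (p ≫ f ≫ i) = τ.t V' hV' (p' ≫ f' ≫ i')) := by
  refine ⟨fun W hW => hW (MTrace.retractIdeal τ) fun V hV => ?_, ?_⟩
  · exact ⟨V, hV, 𝟙 V, 𝟙 V, by simpa using MTrace.inKer_zero⟩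
  · intro W V V' hV hV' i p i' p' hip hip' f f' hf
    rw [MTrace.t_comp_eq_of_inKer_sub hV p i hf, MTrace.t_comp_eq_of_retract hV hV' hip hip']
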